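/- arXiv:2504.04799 — 2 statements merged into one kernel-verified Lean document; each statement's English description precedes it below -/
import Mathlib

section
/- Let L be a symmetric positive semidefinite n×n real matrix, c > 0, and 0 < σ_min < σ_max. Set g(τ) := σ_min (σ_max/σ_min)^τ √(2 ln(σ_max/σ_min)) and A := ln(σ_max/σ_min) • I + c • L. Then for all t₁, t₂ ≥ 0, ∫_0^{min(t₁,t₂)} g(τ)² • (exp(−c(t₁−τ) • L) * exp(−c(t₂−τ) • L)ᵀ) dτ = σ_min² ln(σ_max/σ_min) • (exp(−c(t₁+t₂) • L) * (exp(2 min(t₁,t₂) • A) − I) * A⁻¹). (This is the cross covariance K_{t₁t₂}, conditioned on Y₀, of the variance-exploding topological heat diffusion TSHeat_VE.) -/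
/-! The transition matrices are exponentials of multiples of the symmetric matrix `L`, so with
`ρ = σ_max / σ_min` the integrand is
`2 σ_min² ln ρ • e^{-c(t₁+t₂)L} (ρ^τ)² e^{2τcL} = 2 σ_min² ln ρ • e^{-c(t₁+t₂)L} e^{2τA}`.
As `A` is positive definite, it is invertible and `τ ↦ e^{τA} A⁻¹` is an antiderivative
of `e^{τA}`. -/

open MeasureTheory Matrix NormedSpace

theorem Real.sq_mul_rpow_mul_sqrt_two_mul_log {ρ : ℝ} (hρ : 1 ≤ ρ) (σ τ : ℝ) :
    (σ * ρ ^ τ * √(2 * log ρ)) ^ 2 = 2 * σ ^ 2 * log ρ * exp (2 * τ * log ρ) := by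
  rw [rpow_def_of_pos (zero_lt_one.trans_le hρ), mul_pow, mul_pow,
    sq_sqrt (mul_nonneg zero_le_two (log_nonneg hρ)), ← exp_nat_mul]
  push_cast
  ring_nf

namespace Matrix

variable {ι : Type*} [Fintype ι] [DecidableEq ι]

section OperatorNorm

-- Any normed algebra structure will do: the statements below only involve the topology.
attribute [local instance] Matrix.linftyOpNormedRing Matrix.linftyOpNormedAlgebra

theorem continuous_exp_smul (A : Matrix ι ι ℝ) : Continuous fun τ : ℝ => exp (τ • A) :=
  exp_continuous.comp (by fun_prop)

theorem hasDerivAt_mul_exp_smul_mul_inv {A : Matrix ι ι ℝ} (hA : IsUnit A.det)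
    (B : Matrix ι ι ℝ) (t : ℝ) :
    HasDerivAt (fun τ : ℝ => B * exp (τ • A) * A⁻¹) (B * exp (t • A)) t := by
  have h := ((hasDerivAt_exp_smul_const A t).const_mul B).mul_const A⁻¹
  rwa [Matrix.mul_assoc, Matrix.mul_assoc, mul_nonsing_inv A hA, Matrix.mul_one] at h

theorem exp_smul_one_add (r : ℝ) (M : Matrix ι ι ℝ) :
    exp (r • (1 : Matrix ι ι ℝ) + M) = Real.exp r • exp M := by
  have h : exp (r • (1 : Matrix ι ι ℝ)) = Real.exp r • 1 := by
    rw [← Algebra.algebraMap_eq_smul_one, ← Algebra.algebraMap_eq_smul_one, Real.exp_eq_exp_ℝ]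
    exact (algebraMap_exp_comm r).symm
  rw [exp_add_of_commute _ _ ((Commute.one_left M).smul_left r), h, smul_one_mul]

end OperatorNorm

theorem exp_smul_mul_exp_smul (L : Matrix ι ι ℝ) (a b : ℝ) :
    exp (a • L) * exp (b • L) = exp ((a + b) • L) := by
  rw [add_smul, exp_add_of_commute _ _ (((Commute.refl L).smul_left a).smul_right b)]

theorem exp_smul_mul_transpose_exp_smul_of_isSymm {L : Matrix ι ι ℝ} (hL : L.IsSymm)
    (c t₁ t₂ τ : ℝ) :
    exp ((-(c * (t₁ - τ))) • L) * (exp ((-(c * (t₂ - τ))) • L))ᵀ =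
      exp ((-(c * (t₁ + t₂))) • L) * exp ((2 * τ * c) • L) := by
  rw [(hL.smul _).exp.eq, exp_smul_mul_exp_smul, exp_smul_mul_exp_smul]
  ring_nf

end Matrix

attribute [local instance] Matrix.normedAddCommGroup Matrix.normedSpace

theorem Matrix.integral_mul_exp_smul {ι : Type*} [Fintype ι] [DecidableEq ι]
    {A : Matrix ι ι ℝ} (hA : IsUnit A.det) (B : Matrix ι ι ℝ) (a b : ℝ) :
    ∫ τ in a..b, B * exp (τ • A) = B * (exp (b • A) - exp (a • A)) * A⁻¹ := by
  rw [intervalIntegral.integral_eq_sub_of_hasDerivAt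
      (fun t _ => hasDerivAt_mul_exp_smul_mul_inv hA B t)
      (((continuous_exp_smul A).const_mul B).intervalIntegrable a b),
    Matrix.mul_sub, Matrix.sub_mul]

theorem tsheat_ve_cross_covariance_general {n : ℕ}
    (L : Matrix (Fin n) (Fin n) ℝ) (hLpsd : L.PosSemidef)
    (c : ℝ) (hc : 0 < c) (σmin σmax : ℝ) (hσ0 : 0 < σmin) (hσ : σmin < σmax) :
    let g : ℝ → ℝ := fun τ =>
      σmin * (σmax / σmin) ^ τ * Real.sqrt (2 * Real.log (σmax / σmin))
    let A : Matrix (Fin n) (Fin n) ℝ :=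
      Real.log (σmax / σmin) • (1 : Matrix (Fin n) (Fin n) ℝ) + c • L
    ∀ t₁ t₂ : ℝ, 0 ≤ t₁ → 0 ≤ t₂ →
      (∫ τ in (0:ℝ)..min t₁ t₂, g τ ^ 2 •
          (exp ((-(c * (t₁ - τ))) • L) * (exp ((-(c * (t₂ - τ))) • L))ᵀ)) =
        (σmin ^ 2 * Real.log (σmax / σmin)) •
          (exp ((-(c * (t₁ + t₂))) • L) *
            (exp ((2 * min t₁ t₂) • A) - 1) * A⁻¹) := by
  set ℓ := Real.log (σmax / σmin)
  intro g A t₁ t₂ _ _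
  set B := exp ((-(c * (t₁ + t₂))) • L)
  have hρ : 1 < σmax / σmin := (one_lt_div hσ0).mpr hσ
  have hℓ : 0 < ℓ := Real.log_pos hρ
  have hL : L.IsSymm := isHermitian_iff_isSymm.mp hLpsd.isHermitian
  have hA : IsUnit A.det := (isUnit_iff_isUnit_det A).mp
    ((PosDef.one.smul hℓ).add_posSemidef (hLpsd.smul hc.le)).isUnit
  have hintegrand : ∀ τ, g τ ^ 2 •
      (exp ((-(c * (t₁ - τ))) • L) * (exp ((-(c * (t₂ - τ))) • L))ᵀ) =
        (2 * (σmin ^ 2 * ℓ)) • (B * exp ((2 * τ) • A)) := fun τ => by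
    rw [exp_smul_mul_transpose_exp_smul_of_isSymm hL,
      Real.sq_mul_rpow_mul_sqrt_two_mul_log hρ.le, smul_add, smul_smul, smul_smul,
      exp_smul_one_add, mul_smul_comm, smul_smul]
    congr 1
    ring
  calc _ = ∫ τ in (0:ℝ)..min t₁ t₂, (2 * (σmin ^ 2 * ℓ)) • (B * exp ((2 * τ) • A)) :=
        intervalIntegral.integral_congr fun τ _ => hintegrand τ
    _ = (σmin ^ 2 * ℓ) • ∫ τ in (0:ℝ)..2 * min t₁ t₂, B * exp (τ • A) := by
        rw [intervalIntegral.integral_smul,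
          intervalIntegral.integral_comp_mul_left (fun u => B * exp (u • A)) two_ne_zero,
          smul_smul, mul_zero]
        congr 1
        ring
    _ = _ := by rw [integral_mul_exp_smul hA, zero_smul, exp_zero]

/-- Cross covariance `K_{t₁t₂}` (conditioned on `Y₀`) of the variance-exploding topological
heat diffusion `TSHeat_VE`, with `g(τ) = σ_min (σ_max/σ_min)^τ √(2 ln(σ_max/σ_min))`,
`L` symmetric positive semidefinite, `c > 0`, `0 < σ_min < σ_max`, and
`A = ln(σ_max/σ_min) • I + c • L`: for `t₁, t₂ ≥ 0`,
`∫_0^{min(t₁,t₂)} g(τ)² • (exp(-c(t₁-τ) • L) exp(-c(t₂-τ) • L)ᵀ) dτ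
  = σ_min² ln(σ_max/σ_min) • (exp(-c(t₁+t₂) • L) (exp(2 min(t₁,t₂) • A) - I) A⁻¹)`. -/
theorem tsheat_ve_cross_covariance {n : ℕ}
    (L : Matrix (Fin n) (Fin n) ℝ) (hL : L.IsSymm) (hLpsd : L.PosSemidef)
    (c : ℝ) (hc : 0 < c) (σmin σmax : ℝ) (hσ0 : 0 < σmin) (hσ : σmin < σmax) :
    let g : ℝ → ℝ := fun τ =>
      σmin * (σmax / σmin) ^ τ * Real.sqrt (2 * Real.log (σmax / σmin))
    let A : Matrix (Fin n) (Fin n) ℝ :=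
      Real.log (σmax / σmin) • (1 : Matrix (Fin n) (Fin n) ℝ) + c • L
    ∀ t₁ t₂ : ℝ, 0 ≤ t₁ → 0 ≤ t₂ →
      (∫ τ in (0:ℝ)..min t₁ t₂, g τ ^ 2 •
          (exp ((-(c * (t₁ - τ))) • L) * (exp ((-(c * (t₂ - τ))) • L))ᵀ)) =
        (σmin ^ 2 * Real.log (σmax / σmin)) •
          (exp ((-(c * (t₁ + t₂))) • L) *
            (exp ((2 * min t₁ t₂) • A) - 1) * A⁻¹) :=
  tsheat_ve_cross_covariance_general L hLpsd c hc σmin σmax hσ0 hσ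
end

section
/- Fix n, K ≥ 1, a symmetric n×n real matrix L, continuous functions h_0, …, h_K : ℝ → ℝ with H_t := ∑_{k=0}^K h_k(t) • L^k, and a continuous function g : ℝ → ℝ. Write Ψ_t := exp(∫_0^t H_τ dτ) and, for t₁ ≥ t₂, K(t₁,t₂) := Ψ_{t₁} * (∫_0^{t₂} g(τ)² • (Ψ_τ⁻¹ * Ψ_τ⁻¹) dτ) * Ψ_{t₂}ᵀ. Then: (i) for fixed t₂ and any t₁ > t₂, the function t₁ ↦ K(t₁,t₂) has derivative H_{t₁} * K(t₁,t₂) at t₁; (ii) for fixed t₁ and any t₂ < t₁, the function t₂ ↦ K(t₁,t₂) has derivative g(t₂)² • (Ψ_{t₁} * Ψ_{t₂}⁻¹) + K(t₁,t₂) * H_{t₂}ᵀ at t₂. -/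
open MeasureTheory Matrix NormedSpace

/-! Every `H_t` is a polynomial in `L`, hence so is every integral `∫_0^t H_τ dτ`, and all of them
commute with each other. Along such a commuting curve `S`, the exponential splits as
`exp (S s) = exp (S s - S t) * exp (S t)`, so `Ψ' = H Ψ`; symmetry of `L` makes every `Ψ_t`
symmetric. Both partial derivatives of `K` then follow from the product rule, with
`Ψ_{t₂}⁻¹ Ψ_{t₂}ᵀ = 1` simplifying the term coming from the inner integral. -/

attribute [local instance] Matrix.normedAddCommGroup Matrix.normedSpace

theorem hasDerivAt_exp_of_commute {𝕂 𝔸 : Type*} [RCLike 𝕂] [NormedRing 𝔸] [NormedAlgebra 𝕂 𝔸]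
    [CompleteSpace 𝔸] {f : 𝕂 → 𝔸} {f' : 𝔸} {t : 𝕂} (hf : HasDerivAt f f' t)
    (hc : ∀ s, Commute (f s) (f t)) :
    HasDerivAt (fun s => exp (f s)) (f' * exp (f t)) t := by
  have hsplit : (fun s => exp (f s)) = fun s => exp (f s - f t) * exp (f t) := by
    funext s
    rw [← exp_add_of_commute_of_mem_ball (𝕂 := 𝕂) ((hc s).sub_left (Commute.refl _))
      ((expSeries_radius_eq_top 𝕂 𝔸).symm ▸ edist_lt_top _ _)
      ((expSeries_radius_eq_top 𝕂 𝔸).symm ▸ edist_lt_top _ _), sub_add_cancel]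
  have hexp : HasFDerivAt exp (1 : 𝔸 →L[𝕂] 𝔸) (f t - f t) := by
    rw [sub_self]
    exact hasFDerivAt_exp_zero
  rw [hsplit]
  exact (hexp.comp_hasDerivAt t (hf.sub_const (f t))).mul_const _

-- Derivatives only depend on the topology, which every matrix norm induces; the operator norm
-- provides the normed algebra structure.
section LinftyOp

attribute [local instance] Matrix.linftyOpNormedAddCommGroup Matrix.linftyOpNormedRing
  Matrix.linftyOpNormedAlgebra

variable {m 𝕂 : Type*} [Fintype m] [DecidableEq m] [RCLike 𝕂]

theorem Matrix.hasDerivAt_exp_of_commute {f : 𝕂 → Matrix m m 𝕂} {f' : Matrix m m 𝕂} {t : 𝕂}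
    (hf : HasDerivAt f f' t) (hc : ∀ s, Commute (f s) (f t)) :
    HasDerivAt (fun s => exp (f s)) (f' * exp (f t)) t :=
  _root_.hasDerivAt_exp_of_commute hf hc

theorem Matrix.hasDerivAt_mul {a b : 𝕂 → Matrix m m 𝕂} {a' b' : Matrix m m 𝕂} {t : 𝕂}
    (ha : HasDerivAt a a' t) (hb : HasDerivAt b b' t) :
    HasDerivAt (fun s => a s * b s) (a' * b t + a t * b') t :=
  ha.mul hb

theorem Matrix.continuous_exp : Continuous (exp : Matrix m m 𝕂 → Matrix m m 𝕂) :=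
  exp_continuous

end LinftyOp

theorem Matrix.continuous_inv_exp_integral {m : Type*} [Fintype m] [DecidableEq m]
    {H : ℝ → Matrix m m ℝ} (hH : Continuous H) (a : ℝ) :
    Continuous fun t => (exp (∫ τ in a..t, H τ))⁻¹ := by
  simp only [← Matrix.exp_neg]
  exact Matrix.continuous_exp.comp
    (intervalIntegral.continuous_primitive (hH.intervalIntegrable · ·) a).neg

theorem HasDerivAt.matrix_transpose {m n 𝕂 : Type*} [Fintype m] [Fintype n] [RCLike 𝕂]
    {f : 𝕂 → Matrix m n 𝕂} {f' : Matrix m n 𝕂} {t : 𝕂} (hf : HasDerivAt f f' t) :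
    HasDerivAt (fun s => (f s)ᵀ) f'ᵀ t :=
  let transposeCLM : Matrix m n 𝕂 →L[𝕂] Matrix n m 𝕂 :=
    ⟨(transposeLinearEquiv m n 𝕂 𝕂).toLinearMap, continuous_id.matrix_transpose⟩
  transposeCLM.hasFDerivAt.comp_hasDerivAt t hf

theorem commute_sum_smul_pow {ι R A : Type*} [CommSemiring R] [Semiring A] [Algebra R A] (a : A)
    (s t : Finset ι) (c d : ι → R) (e : ι → ℕ) :
    Commute (∑ k ∈ s, c k • a ^ e k) (∑ k ∈ t, d k • a ^ e k) :=
  .sum_left _ _ _ fun k _ => .sum_right _ _ _ fun l _ =>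
    ((Commute.pow_pow_self a (e k) (e l)).smul_left (c k)).smul_right (d l)

theorem Matrix.IsSymm.sum_smul_pow {ι m R : Type*} [Fintype m] [DecidableEq m] [CommSemiring R]
    {A : Matrix m m R} (hA : A.IsSymm) (s : Finset ι) (c : ι → R) (e : ι → ℕ) :
    (∑ k ∈ s, c k • A ^ e k).IsSymm := by
  simp only [IsSymm, transpose_sum, transpose_smul, (hA.pow _).eq]

theorem intervalIntegral.integral_sum_smul_const {ι E : Type*} [NormedAddCommGroup E]
    [NormedSpace ℝ E] [CompleteSpace E] {μ : Measure ℝ} {a b : ℝ} (s : Finset ι)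
    {f : ι → ℝ → ℝ} (v : ι → E) (hf : ∀ k ∈ s, IntervalIntegrable (f k) μ a b) :
    ∫ x in a..b, ∑ k ∈ s, f k x • v k ∂μ = ∑ k ∈ s, (∫ x in a..b, f k x ∂μ) • v k := by
  rw [integral_finsetSum fun k hk =>
    ⟨(hf k hk).1.smul_const (v k), (hf k hk).2.smul_const (v k)⟩]
  simp only [integral_smul_const]

section PolynomialDrift

variable {m ι : Type*} [Fintype m] [DecidableEq m] (s : Finset ι) (L : Matrix m m ℝ)
  (e : ι → ℕ) {h : ι → ℝ → ℝ}

theorem continuous_sum_smul_pow (hh : ∀ k, Continuous (h k)) :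
    Continuous fun τ => ∑ k ∈ s, h k τ • L ^ e k :=
  continuous_finsetSum _ fun k _ => (hh k).smul continuous_const

theorem integral_sum_smul_pow (hh : ∀ k, Continuous (h k)) (a b : ℝ) :
    ∫ τ in a..b, ∑ k ∈ s, h k τ • L ^ e k = ∑ k ∈ s, (∫ τ in a..b, h k τ) • L ^ e k :=
  intervalIntegral.integral_sum_smul_const s _ fun k _ => (hh k).intervalIntegrable a b

theorem hasDerivAt_exp_integral_sum_smul_pow (hh : ∀ k, Continuous (h k)) (a t : ℝ) :
    HasDerivAt (fun u => exp (∫ τ in a..u, ∑ k ∈ s, h k τ • L ^ e k))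
      ((∑ k ∈ s, h k t • L ^ e k) * exp (∫ τ in a..t, ∑ k ∈ s, h k τ • L ^ e k)) t := by
  refine Matrix.hasDerivAt_exp_of_commute
    ((continuous_sum_smul_pow s L e hh).integral_hasStrictDerivAt a t).hasDerivAt fun u => ?_
  rw [integral_sum_smul_pow s L e hh, integral_sum_smul_pow s L e hh]
  exact commute_sum_smul_pow L s s _ _ e

theorem isSymm_exp_integral_sum_smul_pow (hL : L.IsSymm) (hh : ∀ k, Continuous (h k))
    (a b : ℝ) : (exp (∫ τ in a..b, ∑ k ∈ s, h k τ • L ^ e k)).IsSymm := by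
  rw [integral_sum_smul_pow s L e hh]
  exact (hL.sum_smul_pow s _ e).exp

end PolynomialDrift

theorem cross_covariance_partial_derivs_ge_general {n K : ℕ}
    (L : Matrix (Fin n) (Fin n) ℝ) (hL : L.IsSymm)
    (h : Fin (K + 1) → ℝ → ℝ) (hh : ∀ k, Continuous (h k))
    (g : ℝ → ℝ) (hg : Continuous g) :
    let H : ℝ → Matrix (Fin n) (Fin n) ℝ := fun t => ∑ k : Fin (K + 1), h k t • L ^ (k : ℕ)
    let Ψ : ℝ → Matrix (Fin n) (Fin n) ℝ := fun t => NormedSpace.exp (∫ τ in (0:ℝ)..t, H τ)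
    let Kc : ℝ → ℝ → Matrix (Fin n) (Fin n) ℝ := fun t₁ t₂ =>
      Ψ t₁ * (∫ τ in (0:ℝ)..t₂, g τ ^ 2 • ((Ψ τ)⁻¹ * (Ψ τ)⁻¹)) * (Ψ t₂)ᵀ
    (∀ t₁ t₂ : ℝ, t₂ < t₁ →
        HasDerivAt (fun u : ℝ => Kc u t₂) (H t₁ * Kc t₁ t₂) t₁) ∧
      (∀ t₁ t₂ : ℝ, t₂ < t₁ →
        HasDerivAt (fun u : ℝ => Kc t₁ u)
          (g t₂ ^ 2 • (Ψ t₁ * (Ψ t₂)⁻¹) + Kc t₁ t₂ * (H t₂)ᵀ) t₂) := by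
  intro H Ψ Kc
  have hΨ' (t : ℝ) : HasDerivAt Ψ (H t * Ψ t) t :=
    hasDerivAt_exp_integral_sum_smul_pow _ L _ hh 0 t
  have hΨ_symm (t : ℝ) : (Ψ t)ᵀ = Ψ t := (isSymm_exp_integral_sum_smul_pow _ L _ hL hh 0 t).eq
  have hΨ_inv_mul (t : ℝ) : (Ψ t)⁻¹ * Ψ t = 1 :=
    nonsing_inv_mul _ ((isUnit_iff_isUnit_det _).1 (isUnit_exp _))
  have hΨ_inv : Continuous fun t => (Ψ t)⁻¹ :=
    continuous_inv_exp_integral (continuous_sum_smul_pow _ L _ hh) 0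
  have hF (t : ℝ) : HasDerivAt (fun u => ∫ τ in (0:ℝ)..u, g τ ^ 2 • ((Ψ τ)⁻¹ * (Ψ τ)⁻¹))
      (g t ^ 2 • ((Ψ t)⁻¹ * (Ψ t)⁻¹)) t :=
    (((hg.pow 2).smul (hΨ_inv.matrix_mul hΨ_inv)).integral_hasStrictDerivAt 0 t).hasDerivAt
  refine ⟨fun t₁ t₂ _ => ?_, fun t₁ t₂ _ => ?_⟩
  · simpa only [Kc, Matrix.mul_assoc, Matrix.mul_zero, add_zero]
      using hasDerivAt_mul (hΨ' t₁) (hasDerivAt_const t₁ (_ * (Ψ t₂)ᵀ))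
  · convert hasDerivAt_mul (hasDerivAt_mul (hasDerivAt_const t₂ (Ψ t₁)) (hF t₂))
      (hΨ' t₂).matrix_transpose using 1
    simp only [Kc, transpose_mul, hΨ_symm, zero_mul, zero_add, mul_smul_comm, smul_mul_assoc,
      Matrix.mul_assoc, hΨ_inv_mul, Matrix.mul_one]

/-- Partial derivatives of the conditional cross covariance
`K(t₁,t₂) = Ψ_{t₁} (∫_0^{t₂} g(τ)² • Ψ_τ⁻¹ Ψ_τ⁻¹ dτ) Ψ_{t₂}ᵀ` (the case `t₁ ≥ t₂`) of the
topological SDE `dY = H_t Y dt + g_t dW`: (i) for fixed `t₂` and `t₁ > t₂`, in the first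
variable the derivative is `H_{t₁} K(t₁,t₂)`; (ii) for fixed `t₁` and `t₂ < t₁`, in the second
variable the derivative is `g(t₂)² • (Ψ_{t₁} Ψ_{t₂}⁻¹) + K(t₁,t₂) H_{t₂}ᵀ`. -/
theorem cross_covariance_partial_derivs_ge {n K : ℕ} (hn : 1 ≤ n) (hK : 1 ≤ K)
    (L : Matrix (Fin n) (Fin n) ℝ) (hL : L.IsSymm)
    (h : Fin (K + 1) → ℝ → ℝ) (hh : ∀ k, Continuous (h k))
    (g : ℝ → ℝ) (hg : Continuous g) :
    let H : ℝ → Matrix (Fin n) (Fin n) ℝ := fun t => ∑ k : Fin (K + 1), h k t • L ^ (k : ℕ)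
    let Ψ : ℝ → Matrix (Fin n) (Fin n) ℝ := fun t => NormedSpace.exp (∫ τ in (0:ℝ)..t, H τ)
    let Kc : ℝ → ℝ → Matrix (Fin n) (Fin n) ℝ := fun t₁ t₂ =>
      Ψ t₁ * (∫ τ in (0:ℝ)..t₂, g τ ^ 2 • ((Ψ τ)⁻¹ * (Ψ τ)⁻¹)) * (Ψ t₂)ᵀ
    (∀ t₁ t₂ : ℝ, t₂ < t₁ →
        HasDerivAt (fun u : ℝ => Kc u t₂) (H t₁ * Kc t₁ t₂) t₁) ∧
      (∀ t₁ t₂ : ℝ, t₂ < t₁ →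
        HasDerivAt (fun u : ℝ => Kc t₁ u)
          (g t₂ ^ 2 • (Ψ t₁ * (Ψ t₂)⁻¹) + Kc t₁ t₂ * (H t₂)ᵀ) t₂) :=
  cross_covariance_partial_derivs_ge_general L hL h hh g hg
end
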